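/- If two translation configurations are related by an orthogonal symmetry Q mapping the dipole grid to itself (i.e., Q permutes dipole positions {r_dk} and maps translation vector w to w′ = Qw), then the translation matrix satisfies G_{w′} = (P ⊗ Q) G_w (P ⊗ Q)⁻¹ where P is the permutation of dipole positions induced by Q; hence G_{w′} is similar to G_w and need not be computed separately. -/

import Mathlib

noncomputable section

/-- Euclidean norm of a vector in `ℝ³`. -/
def vecNorm (R : Fin 3 → ℝ) : ℝ := Real.sqrt (∑ i, R i ^ 2)

/-- The scalar prefactor `ψ(R) = −jkη e^{−jkR}/(4πR)` of the free-space dyadic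
Green's function, as a function of the distance `R`. -/
def psiGF (k η R : ℝ) : ℂ :=
  -Complex.I * k * η * Complex.exp (-Complex.I * k * R) / (4 * Real.pi * R)

/-- The free-space dyadic Green's function expressed as a function of the
difference vector `R = r − r′`:
`D = ψ(R)[ I(1 − j/(kR) − 1/(k²R²)) − R̂R̂ᵀ(1 − 3j/(kR) − 3/(k²R²)) ]`. -/
def greenDyadic (k η : ℝ) (R : Fin 3 → ℝ) : Matrix (Fin 3) (Fin 3) ℂ :=
  fun i j =>
    psiGF k η (vecNorm R) *
      ((if i = j then 1 else 0) *
          (1 - Complex.I / (k * vecNorm R) - 1 / (k ^ 2 * vecNorm R ^ 2)) -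
        ((R i / vecNorm R : ℝ) : ℂ) * ((R j / vecNorm R : ℝ) : ℂ) *
          (1 - 3 * Complex.I / (k * vecNorm R) - 3 / (k ^ 2 * vecNorm R ^ 2)))

end

noncomputable section
open Matrix

/-- The translation matrix `G_w` whose 3×3 blocks are
`D(w + r_dl, r_dk) = D-of-difference (w + r_dl − r_dk)` for dipole positions
`r_dk` (source box) and `r_dl` (test box). Row index `(l,i)`, column index `(k,j)`. -/
def translationMatrix (k η : ℝ) {Nd : ℕ} (rd : Fin Nd → (Fin 3 → ℝ))
    (w : Fin 3 → ℝ) : Matrix (Fin Nd × Fin 3) (Fin Nd × Fin 3) ℂ :=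
  fun p q => greenDyadic k η (w + rd p.1 - rd q.1) p.2 q.2

/-- The Kronecker-type similarity matrix `P ⊗ Q` for a permutation `σ` of the
dipole positions and an orthogonal matrix `Q`. -/
def permKron {Nd : ℕ} (σ : Equiv.Perm (Fin Nd)) (Q : Matrix (Fin 3) (Fin 3) ℝ) :
    Matrix (Fin Nd × Fin 3) (Fin Nd × Fin 3) ℂ :=
  fun p q => (if p.1 = σ q.1 then 1 else 0) * ((Q p.2 q.2 : ℝ) : ℂ)

/-!
The dyadic Green's function is isotropic, `D(R) = a(|R|) I - b(|R|) R̂ R̂ᵀ`, so for orthogonal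
`Q` we have `D(QR) Q = Q D(R)`. Since `Q(w + r_{σ⁻¹ l} - r_m) = Qw + r_l - r_{σ m}`, these block
identities assemble into `G_{Qw} (P ⊗ Q) = (P ⊗ Q) G_w`, and `P ⊗ Q` is invertible as the
Kronecker product of a permutation matrix and an orthogonal one.
-/

namespace Matrix

variable {n α : Type*} [Fintype n] [DecidableEq n] [CommRing α]

theorem smul_one_sub_smul_vecMulVec_mulVec_mul {U : Matrix n n α} (hU : Uᵀ * U = 1)
    (a b : α) (u : n → α) :
    (a • 1 - b • vecMulVec (U *ᵥ u) (U *ᵥ u)) * U = U * (a • 1 - b • vecMulVec u u) := by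
  have hu : (U *ᵥ u) ᵥ* U = u := by rw [← vecMul_transpose, vecMul_vecMul, hU, vecMul_one]
  rw [sub_mul, mul_sub, smul_mul_assoc, smul_mul_assoc, mul_smul_comm, mul_smul_comm, one_mul,
    mul_one, vecMulVec_mul, mul_vecMulVec, hu]

theorem transpose_map_mul_map_eq_one {β : Type*} [CommRing β] (f : α →+* β) {U : Matrix n n α}
    (hU : Uᵀ * U = 1) : (U.map f)ᵀ * U.map f = 1 := by
  rw [← transpose_map, ← Matrix.map_mul, hU, Matrix.map_one _ (map_zero f) (map_one f)]

end Matrix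

open Kronecker

theorem vecNorm_mulVec {Q : Matrix (Fin 3) (Fin 3) ℝ} (hQ : Qᵀ * Q = 1) (R : Fin 3 → ℝ) :
    vecNorm (Q *ᵥ R) = vecNorm R := by
  have h : Q *ᵥ R ⬝ᵥ Q *ᵥ R = R ⬝ᵥ R := by
    rw [dotProduct_mulVec, vecMul_mulVec, hQ, vecMul_one]
  simpa only [vecNorm, dotProduct, sq] using congrArg Real.sqrt h

def unitDirection (R : Fin 3 → ℝ) : Fin 3 → ℂ := fun i => ((R i / vecNorm R : ℝ) : ℂ)

theorem unitDirection_mulVec {Q : Matrix (Fin 3) (Fin 3) ℝ} (hQ : Qᵀ * Q = 1) (R : Fin 3 → ℝ) :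
    unitDirection (Q *ᵥ R) = Q.map Complex.ofRealHom *ᵥ unitDirection R := by
  ext i
  simp [unitDirection, vecNorm_mulVec hQ, mulVec, dotProduct, Finset.sum_div, mul_div_assoc]

theorem greenDyadic_eq_smul_one_sub_smul_vecMulVec (k η : ℝ) (R : Fin 3 → ℝ) :
    greenDyadic k η R =
      (psiGF k η (vecNorm R) *
          (1 - Complex.I / (k * vecNorm R) - 1 / (k ^ 2 * vecNorm R ^ 2))) • 1 -
        (psiGF k η (vecNorm R) *
            (1 - 3 * Complex.I / (k * vecNorm R) - 3 / (k ^ 2 * vecNorm R ^ 2))) •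
          vecMulVec (unitDirection R) (unitDirection R) := by
  ext i j
  simp only [greenDyadic, unitDirection, Matrix.sub_apply, Matrix.smul_apply, one_apply,
    vecMulVec_apply, smul_eq_mul]
  ring

theorem greenDyadic_mulVec_mul (k η : ℝ) {Q : Matrix (Fin 3) (Fin 3) ℝ} (hQ : Qᵀ * Q = 1)
    (R : Fin 3 → ℝ) :
    greenDyadic k η (Q *ᵥ R) * Q.map Complex.ofRealHom
      = Q.map Complex.ofRealHom * greenDyadic k η R := by
  rw [greenDyadic_eq_smul_one_sub_smul_vecMulVec, greenDyadic_eq_smul_one_sub_smul_vecMulVec,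
    vecNorm_mulVec hQ, unitDirection_mulVec hQ,
    smul_one_sub_smul_vecMulVec_mulVec_mul (transpose_map_mul_map_eq_one _ hQ)]

-- `permMatrixHom σ = σ⁻¹.permMatrix` has entries `[i = σ j]`, the convention of `permKron`.
theorem permKron_eq_kronecker {Nd : ℕ} (σ : Equiv.Perm (Fin Nd)) (Q : Matrix (Fin 3) (Fin 3) ℝ) :
    permKron σ Q = permMatrixHom (R := ℂ) σ ⊗ₖ Q.map Complex.ofRealHom := by
  ext p q
  simp [permKron, Equiv.symm_apply_eq]

section

variable {Nd : ℕ} (σ : Equiv.Perm (Fin Nd)) (Q : Matrix (Fin 3) (Fin 3) ℝ)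
  (M : Matrix (Fin Nd × Fin 3) (Fin Nd × Fin 3) ℂ) (p q : Fin Nd × Fin 3)

theorem permKron_mul_apply :
    (permKron σ Q * M) p q = ∑ a, (Q p.2 a : ℂ) * M (σ⁻¹ p.1, a) q := by
  simp [mul_apply, permKron, Fintype.sum_prod_type, ite_mul, ← Equiv.symm_apply_eq]

theorem mul_permKron_apply :
    (M * permKron σ Q) p q = ∑ b, M p (σ q.1, b) * (Q b q.2 : ℂ) := by
  simp [mul_apply, permKron, Fintype.sum_prod_type, mul_ite]

end

theorem translationMatrix_mulVec_mul_permKron (k η : ℝ) {Nd : ℕ} (rd : Fin Nd → Fin 3 → ℝ)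
    (w : Fin 3 → ℝ) {Q : Matrix (Fin 3) (Fin 3) ℝ} (hQ : Qᵀ * Q = 1) {σ : Equiv.Perm (Fin Nd)}
    (hσ : ∀ l, Q *ᵥ rd l = rd (σ l)) :
    translationMatrix k η rd (Q *ᵥ w) * permKron σ Q =
      permKron σ Q * translationMatrix k η rd w := by
  ext p q
  have hR : Q *ᵥ w + rd p.1 - rd (σ q.1) = Q *ᵥ (w + rd (σ⁻¹ p.1) - rd q.1) := by
    rw [mulVec_sub, mulVec_add, hσ, hσ, Equiv.Perm.inv_def, Equiv.apply_symm_apply]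
  have hblock :=
    congrFun (congrFun (greenDyadic_mulVec_mul k η hQ (w + rd (σ⁻¹ p.1) - rd q.1)) p.2) q.2
  rw [mul_permKron_apply, permKron_mul_apply]
  simp only [translationMatrix, hR]
  simpa only [mul_apply, map_apply, Complex.ofRealHom_eq_coe] using hblock

theorem isUnit_permKron {Nd : ℕ} (σ : Equiv.Perm (Fin Nd)) {Q : Matrix (Fin 3) (Fin 3) ℝ}
    (hQ : Qᵀ * Q = 1) : IsUnit (permKron σ Q) := by
  rw [permKron_eq_kronecker]
  exact ((Group.isUnit σ).map (permMatrixHom (R := ℂ))).kronecker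
    (.of_mul_eq_one_right _ (transpose_map_mul_map_eq_one _ hQ))

theorem translationMatrix_symmetry_general (k η : ℝ)
    {Nd : ℕ} (rd : Fin Nd → (Fin 3 → ℝ)) (w : Fin 3 → ℝ)
    (Q : Matrix (Fin 3) (Fin 3) ℝ) (hQ : Qᵀ * Q = 1)
    (σ : Equiv.Perm (Fin Nd)) (hσ : ∀ l, Q.mulVec (rd l) = rd (σ l)) :
    IsUnit (permKron σ Q) ∧
    translationMatrix k η rd (Q.mulVec w)
      = permKron σ Q * translationMatrix k η rd w * (permKron σ Q)⁻¹ := by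
  have hK := isUnit_permKron σ hQ
  refine ⟨hK, ?_⟩
  rw [← translationMatrix_mulVec_mul_permKron k η rd w hQ hσ,
    mul_nonsing_inv_cancel_right _ _ ((isUnit_iff_isUnit_det _).mp hK)]

/-- If an orthogonal symmetry `Q` maps the dipole grid to itself via the
permutation `σ` and maps the translation vector `w` to `w′ = Qw`, then
`G_{w′} = (P ⊗ Q) G_w (P ⊗ Q)⁻¹`: the two translation matrices are similar. -/
theorem translationMatrix_symmetry (k η : ℝ) (hk : 0 < k) (hη : 0 < η)
    {Nd : ℕ} (rd : Fin Nd → (Fin 3 → ℝ)) (w : Fin 3 → ℝ)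
    (Q : Matrix (Fin 3) (Fin 3) ℝ) (hQ : Qᵀ * Q = 1)
    (σ : Equiv.Perm (Fin Nd)) (hσ : ∀ l, Q.mulVec (rd l) = rd (σ l))
    (hfar : ∀ l m : Fin Nd, w + rd l - rd m ≠ 0) :
    IsUnit (permKron σ Q) ∧
    translationMatrix k η rd (Q.mulVec w)
      = permKron σ Q * translationMatrix k η rd w * (permKron σ Q)⁻¹ :=
  translationMatrix_symmetry_general k η rd w Q hQ σ hσ

end
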